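/- For all real numbers x, y, z with x + y + z = 0 and 0 < x² + y² + z² < 0.170856², one has e^{2x} + e^{2y} + e^{2z} − 3 ≥ 1.9·(x² + y² + z²). -/

import Mathlib

open Real

/-! Summing the cubic Taylor lower bound `e^t ≥ 1 + t + t²/2 + t³/6` over `t = 2x, 2y, 2z` and using
`x + y + z = 0` (so `x³ + y³ + z³ = 3xyz`) gives `Σ e^{2x} - 3 ≥ 2s + 4xyz` with
`s = x² + y² + z²`. The cubic term is controlled by `54 (xyz)² ≤ s³`, so `|4xyz| ≤ s/10`
as soon as `s ≤ 54/1600`. -/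

lemma cubic_le_exp_of_abs_le_one {t : ℝ} (ht : |t| ≤ 1) :
    1 + t + t ^ 2 / 2 + t ^ 3 / 6 ≤ exp t := by
  have h := Real.exp_bound ht (n := 5) (by norm_num)
  simp only [Finset.sum_range_succ, Finset.sum_range_zero, Nat.factorial] at h
  have hrem : |t| ^ 5 ≤ t ^ 4 := by
    calc |t| ^ 5 ≤ |t| ^ 4 := pow_le_pow_of_le_one (abs_nonneg t) ht (by norm_num)
      _ = t ^ 4 := by rw [← abs_pow, abs_of_nonneg (by positivity)]
  norm_num at h
  nlinarith [(abs_sub_le_iff.1 h).2]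

lemma sq_mul_mul_le_of_add_add_eq_zero {x y z : ℝ} (h : x + y + z = 0) :
    54 * (x * y * z) ^ 2 ≤ (x ^ 2 + y ^ 2 + z ^ 2) ^ 3 := by
  obtain rfl : z = -x - y := by linarith
  -- the difference is `2 ((x - y)(x + 2y)(2x + y))²`
  nlinarith [sq_nonneg ((x - y) * (x + 2 * y) * (2 * x + y))]

lemma two_mul_sq_add_four_mul_le_exp_sum {x y z : ℝ} (h : x + y + z = 0)
    (hx : |2 * x| ≤ 1) (hy : |2 * y| ≤ 1) (hz : |2 * z| ≤ 1) :
    2 * (x ^ 2 + y ^ 2 + z ^ 2) + 4 * (x * y * z) ≤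
      exp (2 * x) + exp (2 * y) + exp (2 * z) - 3 := by
  have hcubes : x ^ 3 + y ^ 3 + z ^ 3 = 3 * (x * y * z) := by
    obtain rfl : z = -x - y := by linarith
    ring
  linarith [cubic_le_exp_of_abs_le_one hx, cubic_le_exp_of_abs_le_one hy,
    cubic_le_exp_of_abs_le_one hz]

lemma abs_two_mul_le_one_of_sq_le {t s : ℝ} (ht : t ^ 2 ≤ s) (hs : s ≤ 1 / 4) :
    |2 * t| ≤ 1 :=
  (sq_le_one_iff_abs_le_one _).1 (by nlinarith)

theorem exp_sum_sub_three_ge_general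
    (x y z : ℝ) (hxyz : x + y + z = 0)
    (hw1 : x ^ 2 + y ^ 2 + z ^ 2 < 0.170856 ^ 2) :
    1.9 * (x ^ 2 + y ^ 2 + z ^ 2) ≤
      Real.exp (2 * x) + Real.exp (2 * y) + Real.exp (2 * z) - 3 := by
  set s := x ^ 2 + y ^ 2 + z ^ 2
  have hs : s ≤ 54 / 1600 := by norm_num at hw1 ⊢; linarith
  have hquarter : s ≤ 1 / 4 := by linarith
  have hexp := two_mul_sq_add_four_mul_le_exp_sum hxyz
    (abs_two_mul_le_one_of_sq_le (by nlinarith [sq_nonneg y, sq_nonneg z]) hquarter)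
    (abs_two_mul_le_one_of_sq_le (by nlinarith [sq_nonneg x, sq_nonneg z]) hquarter)
    (abs_two_mul_le_one_of_sq_le (by nlinarith [sq_nonneg x, sq_nonneg y]) hquarter)
  have hcubic : (40 * (x * y * z)) ^ 2 ≤ s ^ 2 := by
    nlinarith [sq_mul_mul_le_of_add_add_eq_zero hxyz, mul_le_mul_of_nonneg_left hs (sq_nonneg s)]
  have hprod : -s ≤ 40 * (x * y * z) := (abs_le_of_sq_le_sq' hcubic (by positivity)).1
  linarith

/-- For real `x, y, z` with `x + y + z = 0` and `0 < x² + y² + z² < 0.170856²`, one has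
`e^{2x} + e^{2y} + e^{2z} − 3 ≥ 1.9(x² + y² + z²)`. -/
theorem exp_sum_sub_three_ge
    (x y z : ℝ) (hxyz : x + y + z = 0)
    (hw0 : 0 < x ^ 2 + y ^ 2 + z ^ 2) (hw1 : x ^ 2 + y ^ 2 + z ^ 2 < 0.170856 ^ 2) :
    1.9 * (x ^ 2 + y ^ 2 + z ^ 2) ≤
      Real.exp (2 * x) + Real.exp (2 * y) + Real.exp (2 * z) - 3 :=
  exp_sum_sub_three_ge_general x y z hxyz hw1
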